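/- arXiv:1801.03158 — 8 statements merged into one kernel-verified Lean document; each statement's English description precedes it below -/
import Mathlib

section
/- Let D₁, D₂, D₃ be three closed disks in ℝ² with centers c₁, c₂, c₃ and positive radii, such that each pairwise intersection Dᵢ ∩ Dⱼ has nonempty interior but the common intersection D₁ ∩ D₂ ∩ D₃ is empty. Then there exist indices i ≠ j and a point u on the intersection of the boundary circles of Dᵢ and Dⱼ such that the angle ∠cᵢ u cⱼ is larger than 2π/3. -/
/-!
Minimise the maximal power `q ↦ maxᵢ (dist q cᵢ ^ 2 - rᵢ ^ 2)`. As the three disks have no common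
point, the minimum is positive, so the minimiser `p` lies outside every disk whose power at `p`
attains the maximum. By minimality no direction `w` lowers all these active powers at once, i.e.
no `w` has `0 < ⟪cᵢ - p, w⟫` for every active `i`; with at most three active centres this forces
two of them, `cᵢ` and `cⱼ`, to be seen from `p` under an angle of cosine at most `-1/2`. The law of
cosines then gives `rᵢ ^ 2 + rⱼ ^ 2 + rᵢ rⱼ < dist cᵢ cⱼ ^ 2`, which together with
`dist cᵢ cⱼ ≤ rᵢ + rⱼ` says exactly that the two boundary circles cross at an angle above `2π/3`.
-/

open EuclideanGeometry InnerProductGeometry Metric Real Filter Topology Finset RealInnerProductSpace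

theorem neg_one_lt_sum_of_card_le_two {ι : Type*} {B : Finset ι} {f : ι → ℝ} (hB : #B ≤ 2)
    (hf : ∀ i ∈ B, -(1 / 2) < f i) : -1 < ∑ i ∈ B, f i := by
  rcases B.eq_empty_or_nonempty with rfl | hne
  · simp
  · calc -1 ≤ ∑ _ ∈ B, -(1 / 2 : ℝ) := by
          rw [sum_const, nsmul_eq_mul]
          have : (#B : ℝ) ≤ 2 := by exact_mod_cast hB
          linarith
      _ < ∑ i ∈ B, f i := sum_lt_sum_of_nonempty hne hf

section
variable {V : Type*} [NormedAddCommGroup V] [InnerProductSpace ℝ V]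

theorem exists_cos_angle_le_neg_half {ι : Type*} (A : Finset ι) (hA : #A ≤ 3) {v : ι → V}
    (hv : ∀ i ∈ A, v i ≠ 0) (h : ∀ w, ∃ i ∈ A, ⟪v i, w⟫ ≤ 0) :
    ∃ i ∈ A, ∃ j ∈ A, i ≠ j ∧ cos (angle (v i) (v j)) ≤ -(1 / 2) := by
  classical
  by_contra! hcos
  -- Test against the sum of the normalised vectors: the cosines at some `v i` sum to at most `0`,
  -- but one of them is `cos 0 = 1` and the at most two others exceed `-1/2`.
  obtain ⟨i, hi, hle⟩ := h (∑ k ∈ A, ‖v k‖⁻¹ • v k)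
  have hvi : 0 < ‖v i‖ := norm_pos_iff.2 (hv i hi)
  have hinner : ⟪v i, ∑ k ∈ A, ‖v k‖⁻¹ • v k⟫ = ‖v i‖ * ∑ k ∈ A, cos (angle (v i) (v k)) := by
    rw [inner_sum, mul_sum]
    refine sum_congr rfl fun k hk => ?_
    have hvk : ‖v k‖ ≠ 0 := norm_ne_zero_iff.2 (hv k hk)
    rw [real_inner_smul_right, cos_angle]
    field_simp
  have hsum : ∑ k ∈ A, cos (angle (v i) (v k)) ≤ 0 := by
    rw [hinner] at hle
    exact nonpos_of_mul_nonpos_right hle hvi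
  rw [← add_sum_erase A _ hi, angle_self (hv i hi), cos_zero] at hsum
  have hrest := neg_one_lt_sum_of_card_le_two (B := A.erase i)
    (by rw [card_erase_of_mem hi]; omega)
    fun k hk => hcos i hi k (mem_of_mem_erase hk) (ne_of_mem_erase hk).symm
  linarith

theorem EuclideanGeometry.Sphere.power_add_smul (s : Sphere V) (p w : V) (t : ℝ) :
    s.power (p + t • w) = s.power p - 2 * t * ⟪s.center - p, w⟫ + t ^ 2 * ‖w‖ ^ 2 := by
  have e : p + t • w - s.center = (p - s.center) + t • w := by abel
  rw [Sphere.power, Sphere.power, dist_eq_norm, dist_eq_norm, e, norm_add_sq_real,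
    real_inner_smul_right, norm_smul, mul_pow, Real.norm_eq_abs, sq_abs, ← neg_sub s.center p,
    inner_neg_left]
  ring

end

theorem EuclideanGeometry.Sphere.continuous_power {P : Type*} [MetricSpace P] (s : Sphere P) :
    Continuous s.power := by
  unfold Sphere.power
  fun_prop

section
variable {P : Type*} [MetricSpace P] {ι : Type*} [Fintype ι] [Nonempty ι]

noncomputable def maxPower (s : ι → Sphere P) (q : P) : ℝ :=
  univ.sup' univ_nonempty fun i => (s i).power q

theorem power_le_maxPower (s : ι → Sphere P) (q : P) (i : ι) : (s i).power q ≤ maxPower s q :=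
  le_sup' (fun i => (s i).power q) (mem_univ i)

theorem maxPower_nonpos_iff {s : ι → Sphere P} (hr : ∀ i, 0 ≤ (s i).radius) {q : P} :
    maxPower s q ≤ 0 ↔ ∀ i, q ∈ closedBall (s i).center (s i).radius := by
  simp only [maxPower, sup'_le_iff, mem_univ, true_implies, mem_closedBall]
  exact forall_congr' fun i => Sphere.power_nonpos_iff_dist_center_le_radius (hr i)

theorem continuous_maxPower (s : ι → Sphere P) : Continuous (maxPower s) :=
  Continuous.finset_sup'_apply _ fun i _ => (s i).continuous_power

theorem exists_forall_maxPower_le [ProperSpace P] [Nonempty P] (s : ι → Sphere P) :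
    ∃ p, ∀ q, maxPower s p ≤ maxPower s q := by
  obtain ⟨i⟩ := ‹Nonempty ι›
  refine (continuous_maxPower s).exists_forall_le
    (tendsto_atTop_mono (power_le_maxPower s · i) ?_)
  exact tendsto_atTop_add_const_right _ _
    ((tendsto_pow_atTop two_ne_zero).comp (tendsto_dist_right_cocompact_atTop _))

end

section
variable {V : Type*} [NormedAddCommGroup V] [InnerProductSpace ℝ V] {ι : Type*} [Fintype ι]
  [Nonempty ι]

theorem exists_power_eq_maxPower_inner_nonpos {s : ι → Sphere V} {p : V}
    (hp : ∀ q, maxPower s p ≤ maxPower s q) (w : V) :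
    ∃ i, (s i).power p = maxPower s p ∧ ⟪(s i).center - p, w⟫ ≤ 0 := by
  by_contra! hdesc
  -- Otherwise a short step along `w` lowers every active power (its derivative is
  -- `-2 ⟪center - p, w⟫ < 0`), while the inactive ones stay below the maximum by continuity.
  have hev : ∀ i, ∀ᶠ t in 𝓝[>] (0 : ℝ), (s i).power (p + t • w) < maxPower s p := by
    intro i
    rcases (power_le_maxPower s p i).lt_or_eq with hlt | heq
    · have hcont : ContinuousAt (fun t : ℝ => (s i).power (p + t • w)) 0 :=
        ((s i).continuous_power.comp (by fun_prop)).continuousAt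
      exact nhdsWithin_le_nhds (hcont.eventually_lt continuousAt_const (by simpa using hlt))
    · have hsmall : ∀ᶠ t in 𝓝 (0 : ℝ), t * ‖w‖ ^ 2 < 2 * ⟪(s i).center - p, w⟫ :=
        (continuous_id.mul continuous_const).continuousAt.eventually_lt continuousAt_const
          (by simpa using hdesc i heq)
      filter_upwards [self_mem_nhdsWithin, nhdsWithin_le_nhds hsmall] with t ht0 ht
      rw [Sphere.power_add_smul, heq]
      nlinarith [mul_pos (Set.mem_Ioi.1 ht0) (sub_pos.2 ht)]
  obtain ⟨t, ht⟩ := (eventually_all.2 hev).exists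
  exact (hp (p + t • w)).not_gt ((sup'_lt_iff _).2 fun i _ => ht i)

theorem exists_cos_angle_le_neg_half_of_forall_maxPower_le (hcard : Fintype.card ι ≤ 3)
    {s : ι → Sphere V} (hr : ∀ i, 0 ≤ (s i).radius) {p : V} (hp : ∀ q, maxPower s p ≤ maxPower s q)
    (hpos : 0 < maxPower s p) :
    ∃ i j, i ≠ j ∧ (s i).radius < dist p (s i).center ∧ (s j).radius < dist p (s j).center ∧
      cos (∠ (s i).center p (s j).center) ≤ -(1 / 2) := by
  classical
  set A := univ.filter fun i => (s i).power p = maxPower s p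
  have hout : ∀ i ∈ A, (s i).radius < dist p (s i).center := fun i hi =>
    (Sphere.power_pos_iff_radius_lt_dist_center (hr i)).1 ((mem_filter.1 hi).2 ▸ hpos)
  have hne : ∀ i ∈ A, (s i).center - p ≠ 0 := fun i hi =>
    sub_ne_zero.2 (dist_pos.1 (((hr i).trans_lt (hout i hi)).trans_eq (dist_comm _ _)))
  obtain ⟨i, hi, j, hj, hij, hcos⟩ := exists_cos_angle_le_neg_half A
    ((card_le_univ A).trans hcard) hne fun w => by
      obtain ⟨i, hi, hw⟩ := exists_power_eq_maxPower_inner_nonpos hp w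
      exact ⟨i, by simpa [A] using hi, hw⟩
  exact ⟨i, j, hij, hout i hi, hout j hj, hcos⟩

end

section
variable {V P : Type*} [NormedAddCommGroup V] [InnerProductSpace ℝ V] [MetricSpace P]
  [NormedAddTorsor V P]

theorem sq_add_sq_add_mul_lt_dist_sq_of_cos_angle_le {a b p : P} {r₁ r₂ : ℝ} (hr₁ : 0 ≤ r₁)
    (hr₂ : 0 ≤ r₂) (ha : r₁ < dist p a) (hb : r₂ < dist p b) (hcos : cos (∠ a p b) ≤ -(1 / 2)) :
    r₁ ^ 2 + r₂ ^ 2 + r₁ * r₂ < dist a b ^ 2 := by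
  have hlaw := law_cos a p b
  rw [dist_comm a p, dist_comm b p] at hlaw
  have hab : 0 ≤ dist p a * dist p b := by positivity
  nlinarith [mul_le_mul_of_nonneg_left hcos hab, mul_lt_mul'' ha hb hr₁ hr₂]

theorem two_pi_div_three_lt_angle {a b u : P} {r₁ r₂ : ℝ} (hr₁ : 0 < r₁) (hr₂ : 0 < r₂)
    (hu₁ : dist u a = r₁) (hu₂ : dist u b = r₂) (h : r₁ ^ 2 + r₂ ^ 2 + r₁ * r₂ < dist a b ^ 2) :
    2 * π / 3 < ∠ a u b := by
  have hlaw := law_cos a u b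
  rw [dist_comm a u, dist_comm b u, hu₁, hu₂] at hlaw
  have hcos : cos (∠ a u b) < cos (2 * π / 3) := by
    rw [show 2 * π / 3 = π - π / 3 by ring, cos_pi_sub, cos_pi_div_three]
    nlinarith [mul_pos hr₁ hr₂]
  by_contra! hle
  exact (cos_le_cos_of_nonneg_of_le_pi (angle_nonneg _ _ _) (by linarith [pi_pos]) hle).not_gt hcos

end

section
variable {V : Type*} [NormedAddCommGroup V] [InnerProductSpace ℝ V]

/-- On the connected sphere `sphere c₁ r₁` the distance to `c₂` takes every value between those
at the two points on the line through the centres, `|r₁ - dist c₁ c₂|` and `r₁ + dist c₁ c₂`. -/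
theorem exists_dist_eq_dist_eq (hV : 1 < Module.rank ℝ V) {c₁ c₂ : V} {r₁ r₂ : ℝ}
    (hc : c₁ ≠ c₂) (h₁ : |r₁ - r₂| ≤ dist c₁ c₂) (h₂ : dist c₁ c₂ ≤ r₁ + r₂) :
    ∃ u, dist u c₁ = r₁ ∧ dist u c₂ = r₂ := by
  have hr₁ : 0 ≤ r₁ := by linarith [neg_abs_le (r₁ - r₂)]
  have hne : ‖c₂ - c₁‖ ≠ 0 := norm_ne_zero_iff.2 (sub_ne_zero.2 hc.symm)
  set e : V := ‖c₂ - c₁‖⁻¹ • (c₂ - c₁)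
  have he : ‖e‖ = 1 := norm_smul_inv_norm (sub_ne_zero.2 hc.symm)
  obtain ⟨d, hd⟩ : ∃ d, dist c₁ c₂ = d := ⟨_, rfl⟩
  rw [hd] at h₁ h₂
  have hc₂ : c₂ = c₁ + d • e := by
    rw [← hd, dist_comm, dist_eq_norm, smul_smul, mul_inv_cancel₀ hne, one_smul, add_sub_cancel]
  have hdist₁ : ∀ t : ℝ, dist (c₁ + t • e) c₁ = |t| := fun t => by
    rw [dist_eq_norm, add_sub_cancel_left, norm_smul, he, mul_one, Real.norm_eq_abs]
  have hdist₂ : ∀ t : ℝ, dist (c₁ + t • e) c₂ = |t - d| := fun t => by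
    rw [dist_eq_norm, hc₂, show c₁ + t • e - (c₁ + d • e) = (t - d) • e by module, norm_smul, he,
      mul_one, Real.norm_eq_abs]
  have hmem : ∀ t, |t| = r₁ → c₁ + t • e ∈ sphere c₁ r₁ := fun t ht => by
    rw [Metric.mem_sphere, hdist₁, ht]
  have hr₂ : r₂ ∈ Set.Icc (dist (c₁ + r₁ • e) c₂) (dist (c₁ + (-r₁) • e) c₂) := by
    rw [hdist₂, hdist₂, Set.mem_Icc, abs_le, le_abs]
    refine ⟨⟨by linarith, by linarith [le_abs_self (r₁ - r₂)]⟩, Or.inr ?_⟩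
    linarith [neg_abs_le (r₁ - r₂)]
  obtain ⟨u, hu, hu₂⟩ := (isPreconnected_sphere hV c₁ r₁).intermediate_value
    (hmem r₁ (abs_of_nonneg hr₁)) (hmem (-r₁) (by rw [abs_neg, abs_of_nonneg hr₁]))
    (continuous_id.dist continuous_const).continuousOn hr₂
  exact ⟨u, hu, hu₂⟩

theorem exists_dist_eq_dist_eq_two_pi_div_three_lt_angle (hV : 1 < Module.rank ℝ V)
    {c₁ c₂ : V} {r₁ r₂ : ℝ} (hr₁ : 0 < r₁) (hr₂ : 0 < r₂)
    (hfar : r₁ ^ 2 + r₂ ^ 2 + r₁ * r₂ < dist c₁ c₂ ^ 2) (hnear : dist c₁ c₂ ≤ r₁ + r₂) :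
    ∃ u, dist u c₁ = r₁ ∧ dist u c₂ = r₂ ∧ 2 * π / 3 < ∠ c₁ u c₂ := by
  have hc : c₁ ≠ c₂ := by
    rintro rfl
    rw [dist_self] at hfar
    nlinarith [mul_pos hr₁ hr₂]
  have hsub : |r₁ - r₂| ≤ dist c₁ c₂ :=
    abs_le_of_sq_le_sq (by nlinarith [mul_pos hr₁ hr₂]) dist_nonneg
  obtain ⟨u, hu₁, hu₂⟩ := exists_dist_eq_dist_eq hV hc hsub hnear
  exact ⟨u, hu₁, hu₂, two_pi_div_three_lt_angle hr₁ hr₂ hu₁ hu₂ hfar⟩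

end

/-- **A non-Helly triple of disks contains a pair with large lens angle.**
Let `D₁, D₂, D₃` be closed disks in `ℝ²` (centers `c i`, positive radii `r i`) such
that each pairwise intersection has nonempty interior but the common intersection is
empty.  Then there are indices `i ≠ j` and a point `u` on the intersection of the
boundary circles of `D i` and `D j` with `∠ (c i) u (c j) > 2π/3`. -/
theorem nonHelly_triple_has_large_lens_angle
    (c : Fin 3 → EuclideanSpace ℝ (Fin 2)) (r : Fin 3 → ℝ)
    (hr : ∀ i, 0 < r i)
    (hpair : ∀ i j, i ≠ j →
      (interior (Metric.closedBall (c i) (r i) ∩ Metric.closedBall (c j) (r j))).Nonempty)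
    (hempty : Metric.closedBall (c 0) (r 0) ∩ Metric.closedBall (c 1) (r 1) ∩
      Metric.closedBall (c 2) (r 2) = ∅) :
    ∃ i j, i ≠ j ∧ ∃ u : EuclideanSpace ℝ (Fin 2),
      dist u (c i) = r i ∧ dist u (c j) = r j ∧
      2 * Real.pi / 3 < EuclideanGeometry.angle (c i) u (c j) := by
  let s : Fin 3 → Sphere (EuclideanSpace ℝ (Fin 2)) := fun i => ⟨c i, r i⟩
  have hs : ∀ i, 0 ≤ (s i).radius := fun i => (hr i).le
  obtain ⟨p, hp⟩ := exists_forall_maxPower_le s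
  have hpos : 0 < maxPower s p := by
    by_contra! h
    have hp' := (maxPower_nonpos_iff hs).1 h
    exact Set.eq_empty_iff_forall_notMem.1 hempty p ⟨⟨hp' 0, hp' 1⟩, hp' 2⟩
  obtain ⟨i, j, hij, hi, hj, hcos⟩ :=
    exists_cos_angle_le_neg_half_of_forall_maxPower_le (by simp) hs hp hpos
  have hnear : dist (c i) (c j) ≤ r i + r j := by
    obtain ⟨x, hxi, hxj⟩ := (hpair i j hij).mono interior_subset
    exact (dist_triangle_left _ _ x).trans (add_le_add hxi hxj)
  have hV : 1 < Module.rank ℝ (EuclideanSpace ℝ (Fin 2)) := by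
    rw [← Module.finrank_eq_rank, finrank_euclideanSpace_fin]
    norm_num
  exact ⟨i, j, hij, exists_dist_eq_dist_eq_two_pi_div_three_lt_angle hV (hr i) (hr j)
    (sq_add_sq_add_mul_lt_dist_sq_of_cos_angle_le (hr i).le (hr j).le hi hj hcos) hnear⟩
end

section
/- Let D₁ and D₂ be closed disks in ℝ² with centers c₁ ≠ c₂ and radii r₁ ≥ r₂ > 0, whose boundary circles intersect at a point u with angle ∠c₁ u c₂ at least 2π/3. Let c = c₁ + √3·r₁·(c₂ − c₁)/‖c₂ − c₁‖ (so that c₁, c₂, c are collinear, c lies on the same side of c₁ as c₂, and ‖c₁ − c‖ = √3·r₁), and let E be the closed disk of radius r₁ centered at c. If c₂ lies on the segment between c₁ and c, then D₂ ⊆ E. -/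
/-!
An obtuse lens angle `θ ≥ 2π/3` forces `cos θ ≤ -1/2`, so the law of cosines gives
`d² ≥ r₁² + r₂² + r₁r₂` for the centre distance `d = ‖c₂ - c₁‖`, and for `r₂ ≤ r₁` this implies
`d ≥ (√3 - 1)r₁ + r₂`. Since `c₂` lies between `c₁` and `c` with `‖c - c₁‖ = √3 r₁`, this says
`‖c - c₂‖ = √3 r₁ - d ≤ r₁ - r₂`, which is the containment of the disks.
-/

open Real EuclideanGeometry

theorem EuclideanGeometry.sq_dist_add_sq_dist_add_mul_le_sq_dist_of_two_pi_div_three_le_angle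
    {V P : Type*} [NormedAddCommGroup V] [InnerProductSpace ℝ V] [MetricSpace P]
    [NormedAddTorsor V P] {a u b : P} (h : 2 * π / 3 ≤ ∠ a u b) :
    dist a u ^ 2 + dist b u ^ 2 + dist a u * dist b u ≤ dist a b ^ 2 := by
  have hcos : cos (∠ a u b) ≤ -(1 / 2) := calc
    cos (∠ a u b) ≤ cos (2 * π / 3) :=
      cos_le_cos_of_nonneg_of_le_pi (by positivity) (angle_le_pi a u b) h
    _ = -(1 / 2) := by
      rw [show 2 * π / 3 = π - π / 3 by ring, cos_pi_sub, cos_pi_div_three]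
  have hlaw := law_cos a u b
  have hprod : 0 ≤ dist a u * dist b u := by positivity
  nlinarith

theorem sqrt_three_sub_one_mul_add_le_of_sq_add_sq_add_mul_le_sq {r₁ r₂ d : ℝ}
    (hr₂ : 0 ≤ r₂) (hr : r₂ ≤ r₁) (hd : 0 ≤ d) (h : r₁ ^ 2 + r₂ ^ 2 + r₁ * r₂ ≤ d ^ 2) :
    (√3 - 1) * r₁ + r₂ ≤ d := by
  have h3 : √3 ^ 2 = 3 := sq_sqrt (by norm_num)
  have hsqrt3 : 3 / 2 ≤ √3 := by nlinarith [sqrt_nonneg 3]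
  refine le_of_pow_le_pow_left₀ two_ne_zero hd ?_
  calc ((√3 - 1) * r₁ + r₂) ^ 2
      = r₁ ^ 2 + r₂ ^ 2 + r₁ * r₂ - (2 * √3 - 3) * (r₁ * (r₁ - r₂)) := by
        linear_combination r₁ ^ 2 * h3
    _ ≤ r₁ ^ 2 + r₂ ^ 2 + r₁ * r₂ := by
        have : 0 ≤ (2 * √3 - 3) * (r₁ * (r₁ - r₂)) := by
          apply mul_nonneg <;> nlinarith
        linarith
    _ ≤ d ^ 2 := h

section NormedSpace

variable {E : Type*} [NormedAddCommGroup E] [NormedSpace ℝ E]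

theorem dist_self_add_div_norm_smul {x v : E} (hv : v ≠ 0) {t : ℝ} (ht : 0 ≤ t) :
    dist x (x + (t / ‖v‖) • v) = t := by
  rw [dist_self_add_right, norm_smul, norm_div, norm_norm, Real.norm_of_nonneg ht,
    div_mul_cancel₀ _ (norm_ne_zero_iff.mpr hv)]

theorem dist_eq_sub_dist_of_mem_segment_of_eq_add_smul {x y z : E} (hxy : x ≠ y) {t : ℝ}
    (ht : 0 ≤ t) (hz : z = x + (t / ‖y - x‖) • (y - x)) (hy : y ∈ segment ℝ x z) :
    dist y z = t - dist x y := by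
  have hxz : dist x z = t := hz ▸ dist_self_add_div_norm_smul (sub_ne_zero.mpr hxy.symm) ht
  linarith [dist_add_dist_of_mem_segment hy]

end NormedSpace

theorem disk_subset_of_lens_angle_ge_general
    (c₁ c₂ : EuclideanSpace ℝ (Fin 2)) (r₁ r₂ : ℝ)
    (hc : c₁ ≠ c₂) (hr : r₂ ≤ r₁)
    (u : EuclideanSpace ℝ (Fin 2))
    (hu₁ : dist u c₁ = r₁) (hu₂ : dist u c₂ = r₂)
    (hangle : 2 * Real.pi / 3 ≤ EuclideanGeometry.angle c₁ u c₂)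
    (c : EuclideanSpace ℝ (Fin 2))
    (hcdef : c = c₁ + (Real.sqrt 3 * r₁ / ‖c₂ - c₁‖) • (c₂ - c₁))
    (hbetween : c₂ ∈ segment ℝ c₁ c) :
    Metric.closedBall c₂ r₂ ⊆ Metric.closedBall c r₁ := by
  have hr₂ : 0 ≤ r₂ := hu₂ ▸ dist_nonneg
  have hcentres : r₁ ^ 2 + r₂ ^ 2 + r₁ * r₂ ≤ dist c₁ c₂ ^ 2 := by
    have := sq_dist_add_sq_dist_add_mul_le_sq_dist_of_two_pi_div_three_le_angle hangle
    rwa [dist_comm c₁ u, dist_comm c₂ u, hu₁, hu₂] at this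
  have hfar := sqrt_three_sub_one_mul_add_le_of_sq_add_sq_add_mul_le_sq hr₂ hr dist_nonneg
    hcentres
  have hc₂c := dist_eq_sub_dist_of_mem_segment_of_eq_add_smul hc
    (mul_nonneg (sqrt_nonneg 3) (hr₂.trans hr)) hcdef hbetween
  refine Metric.closedBall_subset_closedBall' ?_
  linarith

/-- **Lemma (subset).**
Let `D₁`, `D₂` be intersecting closed disks with centers `c₁ ≠ c₂` and radii
`r₁ ≥ r₂ > 0`, whose boundary circles meet at a point `u` with lens angle
`∠ c₁ u c₂ ≥ 2π/3`.  Let `c = c₁ + √3·r₁·(c₂ − c₁)/‖c₂ − c₁‖` and let `E` be the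
closed disk of radius `r₁` centered at `c`.  If `c₂` lies on the segment between
`c₁` and `c`, then `D₂ ⊆ E`. -/
theorem disk_subset_of_lens_angle_ge
    (c₁ c₂ : EuclideanSpace ℝ (Fin 2)) (r₁ r₂ : ℝ)
    (hc : c₁ ≠ c₂) (hr₂ : 0 < r₂) (hr : r₂ ≤ r₁)
    (u : EuclideanSpace ℝ (Fin 2))
    (hu₁ : dist u c₁ = r₁) (hu₂ : dist u c₂ = r₂)
    (hangle : 2 * Real.pi / 3 ≤ EuclideanGeometry.angle c₁ u c₂)
    (c : EuclideanSpace ℝ (Fin 2))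
    (hcdef : c = c₁ + (Real.sqrt 3 * r₁ / ‖c₂ - c₁‖) • (c₂ - c₁))
    (hbetween : c₂ ∈ segment ℝ c₁ c) :
    Metric.closedBall c₂ r₂ ⊆ Metric.closedBall c r₁ :=
  disk_subset_of_lens_angle_ge_general c₁ c₂ r₁ r₂ hc hr u hu₁ hu₂ hangle c hcdef hbetween
end

section
/- Fix r > 0 and work in ℝ² with coordinates. Let D₁ be the closed disk of radius r centered at c₁ = (−√3·r/2, 0) and D₂ the closed disk of radius r centered at c₂ = (√3·r/2, 0) (these two disks have lens angle exactly 2π/3). Let P = {c₁, c₂, (0, r), (0, −r)}. Then every closed disk F of radius at least r that intersects both D₁ and D₂ contains at least one point of P. -/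
/-!
By the symmetries `(x, y) ↦ (±x, ±y)` of the configuration we may assume that the centre
`f = (x, y)` of `F` lies in the closed first quadrant. Put `a = √3 r / 2`, `c₂ = (a, 0)`,
`q = (0, r)`; since `F` meets `D₁`, `|f - c₁| ≤ R + r`, and we show that `f` is within `R` of
whichever of `c₂`, `q` is nearer. If `|f - c₁|²` exceeds the squared distance to that point by at
least `(R + r)² - R²` we are done at once. Otherwise `f` lies in a bounded polygon, and pushing `y`
to its boundary (the bisector of `c₂ q`, or the radical axis of the circles of radii `R + r`
about `c₁` and `R` about `q`) leaves a convex quadratic in `x` on an interval whose values at the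
endpoints are at most `R²` precisely because `R ≥ r`.
-/

/-- The point of `ℝ²` with the given coordinates. -/
noncomputable def planePt (x y : ℝ) : EuclideanSpace ℝ (Fin 2) :=
  (WithLp.equiv 2 (Fin 2 → ℝ)).symm ![x, y]

section LensCoordinates

variable {r R a x y : ℝ}

/-- The left side is `4 |p - c₂|²` for the point `p` of abscissa `x` on the bisector of `c₂ q`. -/
theorem sq_dist_on_bisector_le (hr : 0 < r) (hR : r ≤ R) (ha : a ^ 2 = 3 * r ^ 2 / 4)
    (hxa : 0 ≤ a * x) (hX : 4 * a * x ≤ 2 * R * r + r ^ 2) :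
    7 * (x ^ 2 - a * x) + 49 / 16 * r ^ 2 ≤ 4 * R ^ 2 := by
  have hsq : (a * x - 3 * r ^ 2 / 8) ^ 2 ≤ ((2 * R * r - r ^ 2 / 2) / 4) ^ 2 :=
    sq_le_sq' (by nlinarith) (by linarith)
  refine le_of_mul_le_mul_left ?_ (by positivity : 0 < 3 * r ^ 2)
  nlinarith [mul_nonneg hr.le (sub_nonneg.2 hR)]

/-- The left side is `4 r² |p - q|²` for the point `p` of abscissa `x` on the radical axis. -/
theorem sq_dist_on_radicalAxis_le (hr : 0 < r) (hR : r ≤ R) (ha : a ^ 2 = 3 * r ^ 2 / 4)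
    (hxa : 0 ≤ a * x) (hX : 4 * a * x ≤ 2 * R * r + r ^ 2) :
    4 * r ^ 2 * x ^ 2 + (2 * R * r - 3 * r ^ 2 / 4 - 2 * a * x) ^ 2 ≤ 4 * r ^ 2 * R ^ 2 := by
  have hx2 : 3 * r ^ 2 * x ^ 2 = 4 * (a * x) ^ 2 := by linear_combination (-4 * x ^ 2) * ha
  nlinarith [mul_nonneg hxa (by linarith : 0 ≤ 2 * R * r + r ^ 2 - 4 * a * x),
    mul_nonneg hr.le (sub_nonneg.2 hR), mul_nonneg hxa (mul_nonneg hr.le (sub_nonneg.2 hR)),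
    mul_nonneg hxa (mul_nonneg hr.le hr.le)]

theorem sq_dist_right_le (hr : 0 < r) (hR : r ≤ R) (ha : a ^ 2 = 3 * r ^ 2 / 4) (ha0 : 0 ≤ a)
    (hx : 0 ≤ x) (hy : 0 ≤ y) (hfar : (x + a) ^ 2 + y ^ 2 ≤ (R + r) ^ 2)
    (hcloser : (x - a) ^ 2 + y ^ 2 ≤ x ^ 2 + (y - r) ^ 2) :
    (x - a) ^ 2 + y ^ 2 ≤ R ^ 2 := by
  rcases le_or_gt (2 * R * r + r ^ 2) (4 * a * x) with hX | hX
  · linarith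
  have hxa : 0 ≤ a * x := mul_nonneg ha0 hx
  have hy_sq : (2 * r * y) ^ 2 ≤ (r ^ 2 / 4 + 2 * a * x) ^ 2 :=
    pow_le_pow_left₀ (by positivity) (by nlinarith) 2
  have hbisector := sq_dist_on_bisector_le hr hR ha hxa hX.le
  refine le_of_mul_le_mul_left ?_ (by positivity : 0 < 4 * r ^ 2)
  nlinarith

theorem sq_dist_top_le (hr : 0 < r) (hR : r ≤ R) (ha : a ^ 2 = 3 * r ^ 2 / 4) (ha0 : 0 ≤ a)
    (hx : 0 ≤ x) (hfar : (x + a) ^ 2 + y ^ 2 ≤ (R + r) ^ 2)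
    (hcloser : x ^ 2 + (y - r) ^ 2 ≤ (x - a) ^ 2 + y ^ 2) :
    x ^ 2 + (y - r) ^ 2 ≤ R ^ 2 := by
  rcases le_or_gt (2 * R * r + 5 / 4 * r ^ 2) (2 * a * x + 2 * r * y) with hL | hL
  · linarith
  have hxa : 0 ≤ a * x := mul_nonneg ha0 hx
  have hX : 4 * a * x ≤ 2 * R * r + r ^ 2 := by nlinarith
  refine le_of_mul_le_mul_left ?_ (by positivity : 0 < 4 * r ^ 2)
  rcases le_total y r with hyr | hyr
  · have hy_sq : (2 * r * (r - y)) ^ 2 ≤ (7 / 4 * r ^ 2 - 2 * a * x) ^ 2 :=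
      pow_le_pow_left₀ (by nlinarith) (by nlinarith) 2
    nlinarith [sq_dist_on_bisector_le hr hR ha hxa hX]
  · have hy_sq : (2 * r * (y - r)) ^ 2 ≤ (2 * R * r - 3 * r ^ 2 / 4 - 2 * a * x) ^ 2 :=
      pow_le_pow_left₀ (by nlinarith) (by nlinarith) 2
    nlinarith [sq_dist_on_radicalAxis_le hr hR ha hxa hX]

theorem sq_dist_right_or_top_le (hr : 0 < r) (hR : r ≤ R) (ha : a ^ 2 = 3 * r ^ 2 / 4)
    (ha0 : 0 ≤ a) (hx : 0 ≤ x) (hy : 0 ≤ y) (hfar : (x + a) ^ 2 + y ^ 2 ≤ (R + r) ^ 2) :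
    (x - a) ^ 2 + y ^ 2 ≤ R ^ 2 ∨ x ^ 2 + (y - r) ^ 2 ≤ R ^ 2 := by
  rcases le_total ((x - a) ^ 2 + y ^ 2) (x ^ 2 + (y - r) ^ 2) with hcloser | hcloser
  · exact .inl (sq_dist_right_le hr hR ha ha0 hx hy hfar hcloser)
  · exact .inr (sq_dist_top_le hr hR ha ha0 hx hfar hcloser)

theorem sq_dist_four_points_le (hr : 0 < r) (hR : r ≤ R) (ha : a ^ 2 = 3 * r ^ 2 / 4)
    (ha0 : 0 ≤ a) (hleft : (x + a) ^ 2 + y ^ 2 ≤ (R + r) ^ 2)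
    (hright : (x - a) ^ 2 + y ^ 2 ≤ (R + r) ^ 2) :
    (x + a) ^ 2 + y ^ 2 ≤ R ^ 2 ∨ (x - a) ^ 2 + y ^ 2 ≤ R ^ 2 ∨
      x ^ 2 + (y - r) ^ 2 ≤ R ^ 2 ∨ x ^ 2 + (y + r) ^ 2 ≤ R ^ 2 := by
  have habs : (|x| + a) ^ 2 + |y| ^ 2 ≤ (R + r) ^ 2 := by
    rcases abs_cases x with ⟨hx, -⟩ | ⟨hx, -⟩ <;> rw [hx, sq_abs]
    · exact hleft
    · linear_combination hright
  rcases sq_dist_right_or_top_le hr hR ha ha0 (abs_nonneg x) (abs_nonneg y) habs with h | h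
  · rw [sq_abs] at h
    rcases abs_cases x with ⟨hx, -⟩ | ⟨hx, -⟩ <;> rw [hx] at h
    · exact .inr (.inl h)
    · exact .inl (by linear_combination h)
  · rw [sq_abs] at h
    rcases abs_cases y with ⟨hy, -⟩ | ⟨hy, -⟩ <;> rw [hy] at h
    · exact .inr (.inr (.inl h))
    · exact .inr (.inr (.inr (by linear_combination h)))

end LensCoordinates

theorem dist_planePt_le_iff {ρ : ℝ} (f : EuclideanSpace ℝ (Fin 2)) (u v : ℝ) (hρ : 0 ≤ ρ) :
    dist f (planePt u v) ≤ ρ ↔ (f 0 - u) ^ 2 + (f 1 - v) ^ 2 ≤ ρ ^ 2 := by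
  rw [← sq_le_sq₀ dist_nonneg hρ, EuclideanSpace.dist_eq, Real.sq_sqrt (by positivity)]
  simp [Fin.sum_univ_two, Real.dist_eq, sq_abs, planePt]

theorem planePt_mem_closedBall {f : EuclideanSpace ℝ (Fin 2)} {u v ρ : ℝ} (hρ : 0 ≤ ρ)
    (h : (f 0 - u) ^ 2 + (f 1 - v) ^ 2 ≤ ρ ^ 2) : planePt u v ∈ Metric.closedBall f ρ :=
  Metric.mem_closedBall'.2 ((dist_planePt_le_iff f u v hρ).2 h)

/-- **Lemma (four points for two disks of equal radius and lens angle `2π/3`).**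
Fix `r > 0`.  Let `D₁`, `D₂` be the closed disks of radius `r` centered at
`c₁ = (−√3·r/2, 0)` and `c₂ = (√3·r/2, 0)` (these have lens angle exactly `2π/3`),
and let `P = {c₁, c₂, (0, r), (0, −r)}`.  Then every closed disk `F` of radius at
least `r` intersecting both `D₁` and `D₂` contains a point of `P`. -/
theorem four_points_stab_disks_meeting_two_lens_disks
    (r : ℝ) (hr : 0 < r) :
    ∀ (f : EuclideanSpace ℝ (Fin 2)) (R : ℝ), r ≤ R →
      (Metric.closedBall f R ∩ Metric.closedBall (planePt (-(Real.sqrt 3 * r / 2)) 0) r).Nonempty →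
      (Metric.closedBall f R ∩ Metric.closedBall (planePt (Real.sqrt 3 * r / 2) 0) r).Nonempty →
      ∃ p ∈ ({planePt (-(Real.sqrt 3 * r / 2)) 0, planePt (Real.sqrt 3 * r / 2) 0,
              planePt 0 r, planePt 0 (-r)} : Set (EuclideanSpace ℝ (Fin 2))),
        p ∈ Metric.closedBall f R := by
  intro f R hR h₁ h₂
  set a := Real.sqrt 3 * r / 2
  have ha : a ^ 2 = 3 * r ^ 2 / 4 := by
    rw [div_pow, mul_pow, Real.sq_sqrt zero_le_three]; ring
  have hR0 : 0 ≤ R := hr.le.trans hR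
  have hleft := (dist_planePt_le_iff f _ _ (by positivity)).1
    (Metric.dist_le_add_of_nonempty_closedBall_inter_closedBall h₁)
  have hright := (dist_planePt_le_iff f _ _ (by positivity)).1
    (Metric.dist_le_add_of_nonempty_closedBall_inter_closedBall h₂)
  rcases sq_dist_four_points_le (x := f 0) (y := f 1) hr hR ha (by positivity)
    (by linear_combination hleft) (by linear_combination hright) with h | h | h | h
  · exact ⟨_, .inl rfl, planePt_mem_closedBall hR0 (by linear_combination h)⟩
  · exact ⟨_, .inr (.inl rfl), planePt_mem_closedBall hR0 (by linear_combination h)⟩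
  · exact ⟨_, .inr (.inr (.inl rfl)), planePt_mem_closedBall hR0 (by linear_combination h)⟩
  · exact ⟨_, .inr (.inr (.inr rfl)), planePt_mem_closedBall hR0 (by linear_combination h)⟩
end

section
/- In ℝ² with coordinates, let D₁ be the closed disk of radius 1 centered at (−√3/2, 0), D₂ the closed disk of radius 1 centered at (√3/2, 0), D₁² the closed disk of radius 2 centered at (−√3/2, 0), D₂² the closed disk of radius 2 centered at (√3/2, 0), D_p the closed disk of radius 1 centered at (0, −1), and D_q the closed disk of radius 1 centered at (0, 1). Then D₁² ∩ D₂² ⊆ D₁ ∪ D₂ ∪ D_p ∪ D_q. -/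
theorem mem_closedBall_planePt_iff {p : EuclideanSpace ℝ (Fin 2)} {c d r : ℝ} (hr : 0 ≤ r) :
    p ∈ Metric.closedBall (planePt c d) r ↔ (p 0 - c) ^ 2 + (p 1 - d) ^ 2 ≤ r ^ 2 := by
  rw [Metric.mem_closedBall, ← sq_le_sq₀ dist_nonneg hr, EuclideanSpace.dist_sq_eq,
    Fin.sum_univ_two]
  simp [planePt, Real.dist_eq, sq_abs]

theorem quadratic_neg_of_mem_strip {a v : ℝ} (hv : 0 ≤ v) (hupper : a + v ≤ 13 / 4)
    (hlower : v + 1 / 4 ≤ a) : 3 * a ^ 2 - 12 * a + 4 * v ^ 2 < 0 := by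
  -- the quadratic equals `-3 (a - v - 1/4) (13/4 - v - a) - (3/2) (a - v - 1/4) - 7 v (3/2 - v) - 45/16`
  nlinarith [mul_nonneg (sub_nonneg.2 hlower) (by linarith : 0 ≤ 13 / 4 - v - a),
    mul_nonneg hv (by linarith : 0 ≤ 3 / 2 - v)]

theorem unit_disks_cover_of_sq_add_sq_le_four {x y : ℝ} (h₁ : (x + √3 / 2) ^ 2 + y ^ 2 ≤ 4)
    (h₂ : (x - √3 / 2) ^ 2 + y ^ 2 ≤ 4) :
    (((x + √3 / 2) ^ 2 + y ^ 2 ≤ 1 ∨ (x - √3 / 2) ^ 2 + y ^ 2 ≤ 1) ∨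
      x ^ 2 + (y + 1) ^ 2 ≤ 1) ∨ x ^ 2 + (y - 1) ^ 2 ≤ 1 := by
  by_contra! ⟨⟨⟨g₁, g₂⟩, g₃⟩, g₄⟩
  set a := x ^ 2 + y ^ 2
  set w := √3 * x with hw
  have hw_sq : w ^ 2 = 3 * x ^ 2 := by rw [hw, mul_pow, Real.sq_sqrt zero_le_three]
  have expand_add : (x + √3 / 2) ^ 2 + y ^ 2 = a + w + 3 / 4 := by
    linear_combination (1 / 4 : ℝ) * Real.sq_sqrt zero_le_three
  have expand_sub : (x - √3 / 2) ^ 2 + y ^ 2 = a - w + 3 / 4 := by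
    linear_combination (1 / 4 : ℝ) * Real.sq_sqrt zero_le_three
  rw [expand_add] at h₁ g₁
  rw [expand_sub] at h₂ g₂
  have hupper : a + |w| ≤ 13 / 4 := by
    have := abs_le.2 (⟨by linarith, by linarith⟩ : -(13 / 4 - a) ≤ w ∧ w ≤ 13 / 4 - a)
    linarith
  have hlower : |w| + 1 / 4 ≤ a := by
    have := abs_le.2 (⟨by linarith, by linarith⟩ : -(a - 1 / 4) ≤ w ∧ w ≤ a - 1 / 4)
    linarith
  have hy : (2 * y) ^ 2 < a ^ 2 := sq_lt_sq' (by linarith) (by linarith)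
  have hneg := quadratic_neg_of_mem_strip (abs_nonneg w) hupper hlower
  rw [sq_abs, hw_sq] at hneg
  linarith

/-- **Covering lemma.**  In `ℝ²`, let `D₁`, `D₂` be the closed unit disks centered at
`(−√3/2, 0)` and `(√3/2, 0)`, let `D₁²`, `D₂²` be the closed disks of radius `2` with
the same centers, and let `D_p`, `D_q` be the closed unit disks centered at `(0, −1)`
and `(0, 1)`.  Then `D₁² ∩ D₂² ⊆ D₁ ∪ D₂ ∪ D_p ∪ D_q`. -/
theorem double_disks_inter_subset_union :
    Metric.closedBall (planePt (-(Real.sqrt 3 / 2)) 0) 2 ∩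
      Metric.closedBall (planePt (Real.sqrt 3 / 2) 0) 2 ⊆
    Metric.closedBall (planePt (-(Real.sqrt 3 / 2)) 0) 1 ∪
      Metric.closedBall (planePt (Real.sqrt 3 / 2) 0) 1 ∪
      Metric.closedBall (planePt 0 (-1)) 1 ∪
      Metric.closedBall (planePt 0 1) 1 := by
  rintro p ⟨h₁, h₂⟩
  simp only [Set.mem_union, mem_closedBall_planePt_iff zero_le_one,
    mem_closedBall_planePt_iff zero_le_two, sub_neg_eq_add, sub_zero, one_pow] at h₁ h₂ ⊢
  norm_num only at h₁ h₂
  exact unit_disks_cover_of_sq_add_sq_le_four h₁ h₂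
end

section
/- Let D₁ and D₂ be closed disks in ℝ² with centers c₁ ≠ c₂ and radii r₁ ≥ r₂ > 0, whose boundary circles intersect at a point u with angle ∠c₁ u c₂ at least 2π/3. Let c = c₁ + √3·r₁·(c₂ − c₁)/‖c₂ − c₁‖ and let E be the closed disk of radius r₁ centered at c. Then every closed disk F of radius at least r₁ that intersects both D₁ and D₂ also intersects E. -/
/-!
By the law of cosines, a lens angle of at least `2π/3` forces `‖c₂ - c₁‖² ≥ r₁² + r₁ r₂ + r₂²`,
hence `‖c₂ - c₁‖ ≥ r₂ + (√3 - 1) r₁`. So `c` either lies on the segment `[c₁, c₂]`, or beyond `c₂`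
at distance `√3 r₁ - ‖c₂ - c₁‖ ≤ r₁ - r₂` from it. The centre `f` of a disk of radius `R` meeting
`D₁` and `D₂` lies within `R + r₁` of `c₁` and within `R + r₂ ≤ R + r₁` of `c₂`; convexity of the
ball of radius `R + r₁` about `f` in the first case, the triangle inequality in the second, put
`c` within `R + r₁` of `f` as well.
-/

open EuclideanGeometry

theorem dist_sq_add_dist_sq_add_mul_le_dist_sq_of_two_pi_div_three_le_angle
    {V P : Type*} [NormedAddCommGroup V] [InnerProductSpace ℝ V] [MetricSpace P]
    [NormedAddTorsor V P] {a u b : P} (h : 2 * Real.pi / 3 ≤ ∠ a u b) :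
    dist a u ^ 2 + dist b u ^ 2 + dist a u * dist b u ≤ dist a b ^ 2 := by
  have hcos : Real.cos (∠ a u b) ≤ -(1 / 2) := by
    have hcos_two_pi_div_three : Real.cos (2 * Real.pi / 3) = -(1 / 2) := by
      rw [show 2 * Real.pi / 3 = Real.pi - Real.pi / 3 by ring, Real.cos_pi_sub,
        Real.cos_pi_div_three]
    rw [← hcos_two_pi_div_three]
    exact Real.cos_le_cos_of_nonneg_of_le_pi (by positivity) (angle_le_pi a u b) h
  have hlaw := dist_sq_eq_dist_sq_add_dist_sq_sub_two_mul_dist_mul_dist_mul_cos_angle a u b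
  nlinarith [mul_nonneg (dist_nonneg (x := a) (y := u)) (dist_nonneg (x := b) (y := u))]

theorem sqrt_three_mul_sub_le_sub_of_sq_add_sq_add_mul_le {r₁ r₂ d : ℝ} (hr₁ : 0 ≤ r₁)
    (hr : r₂ ≤ r₁) (hd : 0 ≤ d) (h : r₁ ^ 2 + r₂ ^ 2 + r₁ * r₂ ≤ d ^ 2) :
    Real.sqrt 3 * r₁ - d ≤ r₁ - r₂ := by
  have hs : Real.sqrt 3 ^ 2 = 3 := Real.sq_sqrt (by norm_num)
  have hs_gt : 3 / 2 < Real.sqrt 3 := by nlinarith [Real.sqrt_nonneg 3]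
  -- `(r₂ + (√3 - 1) r₁)² = r₁² + r₁ r₂ + r₂² - (2√3 - 3) r₁ (r₁ - r₂)`
  suffices r₂ + (Real.sqrt 3 - 1) * r₁ ≤ d by linarith
  refine le_of_sq_le_sq ?_ hd
  nlinarith [mul_nonneg (mul_nonneg hr₁ (sub_nonneg.2 hr)) (by linarith : 0 ≤ 2 * Real.sqrt 3 - 3)]

theorem mem_segment_or_dist_le_of_sub_norm_le {E : Type*} [NormedAddCommGroup E]
    [NormedSpace ℝ E] {x y : E} {a δ : ℝ} (ha : 0 ≤ a) (h : a - ‖y - x‖ ≤ δ) :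
    x + (a / ‖y - x‖) • (y - x) ∈ segment ℝ x y ∨ dist (x + (a / ‖y - x‖) • (y - x)) y ≤ δ := by
  set t := a / ‖y - x‖
  rcases le_or_gt t 1 with ht | ht
  · exact .inl (segment_eq_image' ℝ x y ▸ ⟨t, ⟨by positivity, ht⟩, rfl⟩)
  · have hxy : 0 < ‖y - x‖ := by
      by_contra! h0
      norm_num [t, norm_le_zero_iff.1 h0] at ht
    right
    calc dist (x + t • (y - x)) y = ‖(t - 1) • (y - x)‖ := by
          rw [dist_eq_norm]; congr 1; module
      _ = a - ‖y - x‖ := by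
          rw [norm_smul, Real.norm_of_nonneg (by linarith), sub_mul, one_mul,
            div_mul_cancel₀ _ hxy.ne']
      _ ≤ δ := h

theorem large_disk_meets_E_general
    (c₁ c₂ : EuclideanSpace ℝ (Fin 2)) (r₁ r₂ : ℝ)
    (hr : r₂ ≤ r₁)
    (u : EuclideanSpace ℝ (Fin 2))
    (hu₁ : dist u c₁ = r₁) (hu₂ : dist u c₂ = r₂)
    (hangle : 2 * Real.pi / 3 ≤ EuclideanGeometry.angle c₁ u c₂)
    (c : EuclideanSpace ℝ (Fin 2))
    (hcdef : c = c₁ + (Real.sqrt 3 * r₁ / ‖c₂ - c₁‖) • (c₂ - c₁)) :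
    ∀ (f : EuclideanSpace ℝ (Fin 2)) (R : ℝ), r₁ ≤ R →
      (Metric.closedBall f R ∩ Metric.closedBall c₁ r₁).Nonempty →
      (Metric.closedBall f R ∩ Metric.closedBall c₂ r₂).Nonempty →
      (Metric.closedBall f R ∩ Metric.closedBall c r₁).Nonempty := by
  intro f R hR hF₁ hF₂
  have hr₁ : 0 ≤ r₁ := hu₁ ▸ dist_nonneg
  have hf₁ := Metric.dist_le_add_of_nonempty_closedBall_inter_closedBall hF₁
  have hf₂ := Metric.dist_le_add_of_nonempty_closedBall_inter_closedBall hF₂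
  have hd : r₁ ^ 2 + r₂ ^ 2 + r₁ * r₂ ≤ ‖c₂ - c₁‖ ^ 2 := by
    have := dist_sq_add_dist_sq_add_mul_le_dist_sq_of_two_pi_div_three_le_angle hangle
    rwa [dist_comm c₁ u, dist_comm c₂ u, hu₁, hu₂, dist_comm, dist_eq_norm] at this
  have hfc : dist f c ≤ R + r₁ := by
    rcases mem_segment_or_dist_le_of_sub_norm_le (by positivity)
      (sqrt_three_mul_sub_le_sub_of_sq_add_sq_add_mul_le hr₁ hr (norm_nonneg _) hd)
      with hseg | hnear
    · rw [← hcdef] at hseg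
      have hball := (convex_closedBall f (R + r₁)).segment_subset
        (Metric.mem_closedBall'.2 hf₁) (Metric.mem_closedBall'.2 (by linarith)) hseg
      exact Metric.mem_closedBall'.1 hball
    · rw [← hcdef] at hnear
      linarith [dist_triangle_right f c c₂]
  obtain ⟨z, hfz, hzc⟩ := exists_dist_le_le (hr₁.trans hR) hr₁ (by linarith)
  exact ⟨z, Metric.mem_closedBall'.2 hfz, hzc⟩

/-- **Claim (*) in the proof of the four-point lemma.**
Let `D₁`, `D₂` be closed disks with centers `c₁ ≠ c₂` and radii `r₁ ≥ r₂ > 0`, whose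
boundary circles meet at a point `u` with lens angle `∠ c₁ u c₂ ≥ 2π/3`.  Let
`c = c₁ + √3·r₁·(c₂ − c₁)/‖c₂ − c₁‖` and let `E` be the closed disk of radius `r₁`
centered at `c`.  Then every closed disk `F` of radius at least `r₁` intersecting
both `D₁` and `D₂` also intersects `E`. -/
theorem large_disk_meets_E
    (c₁ c₂ : EuclideanSpace ℝ (Fin 2)) (r₁ r₂ : ℝ)
    (hc : c₁ ≠ c₂) (hr₂ : 0 < r₂) (hr : r₂ ≤ r₁)
    (u : EuclideanSpace ℝ (Fin 2))
    (hu₁ : dist u c₁ = r₁) (hu₂ : dist u c₂ = r₂)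
    (hangle : 2 * Real.pi / 3 ≤ EuclideanGeometry.angle c₁ u c₂)
    (c : EuclideanSpace ℝ (Fin 2))
    (hcdef : c = c₁ + (Real.sqrt 3 * r₁ / ‖c₂ - c₁‖) • (c₂ - c₁)) :
    ∀ (f : EuclideanSpace ℝ (Fin 2)) (R : ℝ), r₁ ≤ R →
      (Metric.closedBall f R ∩ Metric.closedBall c₁ r₁).Nonempty →
      (Metric.closedBall f R ∩ Metric.closedBall c₂ r₂).Nonempty →
      (Metric.closedBall f R ∩ Metric.closedBall c r₁).Nonempty :=
  large_disk_meets_E_general c₁ c₂ r₁ r₂ hr u hu₁ hu₂ hangle c hcdef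
end

section
/- Let D₁ and D₂ be closed disks in ℝ² with centers c₁, c₂ and radii r₁ ≥ r₂ > 0, whose boundary circles intersect at a point u with angle α = ∠c₁ u c₂ satisfying α ≥ 2π/3. Then ‖c₁ − c₂‖ ≥ (√3 − 1)·r₁ + r₂. -/
/-!
By the law of cosines, a lens angle of at least `2π/3` (where `cos ≤ -1/2`) gives
`‖c₁ - c₂‖² ≥ r₁² + r₂² + r₁ r₂`, and this exceeds `((√3 - 1) r₁ + r₂)²` by
`(2√3 - 3) r₁ (r₁ - r₂) ≥ 0`.
-/

open Real EuclideanGeometry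

lemma Real.cos_le_neg_half_of_two_pi_div_three_le {x : ℝ} (h : 2 * π / 3 ≤ x) (hx : x ≤ π) :
    cos x ≤ -1 / 2 := by
  have hcos : cos (2 * π / 3) = -1 / 2 := by
    rw [show 2 * π / 3 = π - π / 3 by ring, cos_pi_sub, cos_pi_div_three]
    norm_num
  exact hcos ▸ cos_le_cos_of_nonneg_of_le_pi (by positivity) hx h

lemma EuclideanGeometry.dist_sq_add_mul_le_of_two_pi_div_three_le_angle
    {V P : Type*} [NormedAddCommGroup V] [InnerProductSpace ℝ V] [MetricSpace P]
    [NormedAddTorsor V P] {p₁ p₂ p₃ : P} (h : 2 * π / 3 ≤ ∠ p₁ p₂ p₃) :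
    dist p₁ p₂ ^ 2 + dist p₃ p₂ ^ 2 + dist p₁ p₂ * dist p₃ p₂ ≤ dist p₁ p₃ ^ 2 := by
  have hcos := cos_le_neg_half_of_two_pi_div_three_le h (angle_le_pi p₁ p₂ p₃)
  have hprod : 0 ≤ dist p₁ p₂ * dist p₃ p₂ := mul_nonneg dist_nonneg dist_nonneg
  nlinarith [law_cos p₁ p₂ p₃]

lemma sq_sqrt_three_sub_one_mul_add_le {a b : ℝ} (ha : 0 ≤ a) (hba : b ≤ a) :
    ((√3 - 1) * a + b) ^ 2 ≤ a ^ 2 + b ^ 2 + a * b := by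
  have hsq : √3 ^ 2 = 3 := sq_sqrt (by norm_num)
  have hcoeff : 0 ≤ 2 * √3 - 3 := by nlinarith [sqrt_nonneg 3]
  have hgap : a ^ 2 + b ^ 2 + a * b - ((√3 - 1) * a + b) ^ 2 = (2 * √3 - 3) * (a * (a - b)) := by
    linear_combination (-a ^ 2) * hsq
  linarith [mul_nonneg hcoeff (mul_nonneg ha (sub_nonneg.2 hba))]

theorem center_dist_ge_of_lens_angle_ge_general
    (c₁ c₂ : EuclideanSpace ℝ (Fin 2)) (r₁ r₂ : ℝ)
    (hr : r₂ ≤ r₁)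
    (u : EuclideanSpace ℝ (Fin 2))
    (hu₁ : dist u c₁ = r₁) (hu₂ : dist u c₂ = r₂)
    (hangle : 2 * Real.pi / 3 ≤ EuclideanGeometry.angle c₁ u c₂) :
    (Real.sqrt 3 - 1) * r₁ + r₂ ≤ ‖c₁ - c₂‖ := by
  have hcenters := dist_sq_add_mul_le_of_two_pi_div_three_le_angle hangle
  rw [dist_comm c₁ u, dist_comm c₂ u, hu₁, hu₂] at hcenters
  have hr₁ : 0 ≤ r₁ := hu₁ ▸ dist_nonneg
  rw [← dist_eq_norm]
  exact (le_abs_self _).trans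
    (abs_le_of_sq_le_sq ((sq_sqrt_three_sub_one_mul_add_le hr₁ hr).trans hcenters) dist_nonneg)

/-- **Center distance lower bound from a large lens angle.**
Let `D₁`, `D₂` be closed disks with centers `c₁`, `c₂` and radii `r₁ ≥ r₂ > 0`, whose
boundary circles meet at a point `u` with lens angle `α = ∠ c₁ u c₂ ≥ 2π/3`.  Then
`‖c₁ − c₂‖ ≥ (√3 − 1)·r₁ + r₂`. -/
theorem center_dist_ge_of_lens_angle_ge
    (c₁ c₂ : EuclideanSpace ℝ (Fin 2)) (r₁ r₂ : ℝ)
    (hr₂ : 0 < r₂) (hr : r₂ ≤ r₁)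
    (u : EuclideanSpace ℝ (Fin 2))
    (hu₁ : dist u c₁ = r₁) (hu₂ : dist u c₂ = r₂)
    (hangle : 2 * Real.pi / 3 ≤ EuclideanGeometry.angle c₁ u c₂) :
    (Real.sqrt 3 - 1) * r₁ + r₂ ≤ ‖c₁ - c₂‖ :=
  center_dist_ge_of_lens_angle_ge_general c₁ c₂ r₁ r₂ hr u hu₁ hu₂ hangle
end

section
/- For any four pairwise distinct closed disks D₁, D₂, D₃, D₄ in ℝ², the family of point-complement ranges does not shatter {D₁, D₂, D₃, D₄}: there exists a subset S ⊆ {1, 2, 3, 4} such that no point v ∈ ℝ² satisfies {i : v ∉ Dᵢ} = S. Consequently, for any finite set 𝒟 of closed disks, the range space (𝒟, {{D ∈ 𝒟 : v ∉ D} : v ∈ ℝ²}) has VC-dimension at most 3. -/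
/-!
The power of a point `v` with respect to the disk `B(c, r)` is `‖v - c‖² - r²`, positive exactly
when `v` lies outside. Four centres in the plane satisfy an affine relation `∑ uᵢ cᵢ = 0`,
`∑ uᵢ = 0` with `u ≠ 0`, and along it `∑ uᵢ (‖v - cᵢ‖² - rᵢ²)` does not depend on `v`: the
quadratic and linear parts in `v` cancel. A point outside exactly the disks with `uᵢ > 0` makes
this constant positive, a point outside exactly those with `uᵢ < 0` makes it negative, so one of
the two patterns is not realised.
-/

open scoped Classical

open Module

section PowerOfPoint

variable {ι E : Type*} [Fintype ι] [NormedAddCommGroup E]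

theorem exists_affine_relation_of_finrank_add_one_lt_card {k V : Type*} [DivisionRing k]
    [AddCommGroup V] [Module k V] [FiniteDimensional k V] (c : ι → V)
    (h : finrank k V + 1 < Fintype.card ι) :
    ∃ u : ι → k, ∑ i, u i = 0 ∧ ∑ i, u i • c i = 0 ∧ ∃ i, u i ≠ 0 := by
  have hdep : ¬ AffineIndependent k c := fun hc =>
    (hc.card_le_finrank_succ.trans (Nat.add_le_add_right (Submodule.finrank_le _) 1)).not_gt h
  simp only [affineIndependent_iff_of_fintype, not_forall] at hdep
  obtain ⟨u, hsum, hc, i, hi⟩ := hdep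
  exact ⟨u, hsum, by rwa [Finset.weightedVSub_eq_linear_combination _ hsum] at hc, i, hi⟩

theorem sum_mul_power_eq [InnerProductSpace ℝ E] {c : ι → E} {u : ι → ℝ} (hsum : ∑ i, u i = 0)
    (hc : ∑ i, u i • c i = 0) (r : ι → ℝ) (v : E) :
    ∑ i, u i * (‖v - c i‖ ^ 2 - r i ^ 2) = ∑ i, u i * (‖c i‖ ^ 2 - r i ^ 2) := by
  have hinner : ∑ i, u i * inner ℝ v (c i) = 0 := by
    simp_rw [← real_inner_smul_right, ← inner_sum, hc, inner_zero_right]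
  calc ∑ i, u i * (‖v - c i‖ ^ 2 - r i ^ 2)
      = (∑ i, u i) * ‖v‖ ^ 2 - 2 * ∑ i, u i * inner ℝ v (c i)
          + ∑ i, u i * (‖c i‖ ^ 2 - r i ^ 2) := by
        simp_rw [norm_sub_sq_real, Finset.sum_mul, Finset.mul_sum, ← Finset.sum_sub_distrib,
          ← Finset.sum_add_distrib]
        exact Finset.sum_congr rfl fun i _ => by ring
    _ = ∑ i, u i * (‖c i‖ ^ 2 - r i ^ 2) := by rw [hsum, hinner]; ring

theorem sum_mul_power_pos {c : ι → E} {r : ι → ℝ} {u : ι → ℝ} {v : E} (hr : ∀ i, 0 ≤ r i)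
    (hv : {i | v ∉ Metric.closedBall (c i) (r i)} = {i | 0 < u i}) (hu : ∃ i, 0 < u i) :
    0 < ∑ i, u i * (‖v - c i‖ ^ 2 - r i ^ 2) := by
  have hout : ∀ i, 0 < u i ↔ r i < ‖v - c i‖ := fun i => by
    simpa [dist_eq_norm] using (Set.ext_iff.mp hv i).symm
  have hterm : ∀ i, 0 < u i → 0 < u i * (‖v - c i‖ ^ 2 - r i ^ 2) := fun i hi =>
    mul_pos hi (sub_pos.mpr (pow_lt_pow_left₀ ((hout i).mp hi) (hr i) two_ne_zero))
  obtain ⟨j, hj⟩ := hu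
  refine Finset.sum_pos' (fun i _ => ?_) ⟨j, Finset.mem_univ j, hterm j hj⟩
  rcases lt_or_ge 0 (u i) with hi | hi
  · exact (hterm i hi).le
  · refine mul_nonneg_of_nonpos_of_nonpos hi (sub_nonpos.mpr ?_)
    exact pow_le_pow_left₀ (norm_nonneg _) (not_lt.mp ((hout i).not.mp hi.not_gt)) 2

theorem exists_ne_setOf_notMem_closedBall [InnerProductSpace ℝ E] [FiniteDimensional ℝ E]
    {c : ι → E} {r : ι → ℝ} (hr : ∀ i, 0 ≤ r i) (h : finrank ℝ E + 1 < Fintype.card ι) :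
    ∃ S : Set ι, ∀ v : E, {i | v ∉ Metric.closedBall (c i) (r i)} ≠ S := by
  obtain ⟨u, hsum, hc, i, hi⟩ := exists_affine_relation_of_finrank_add_one_lt_card c h
  have hsum' : ∑ i, (-u) i = 0 := by simp [hsum]
  obtain ⟨j, -, hj⟩ :=
    Finset.exists_pos_of_sum_zero_of_exists_nonzero u hsum ⟨i, Finset.mem_univ i, hi⟩
  obtain ⟨k, -, hk⟩ := Finset.exists_pos_of_sum_zero_of_exists_nonzero (-u) hsum'
    ⟨i, Finset.mem_univ i, neg_ne_zero.mpr hi⟩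
  by_contra! hshatter
  obtain ⟨v, hv⟩ := hshatter {i | 0 < u i}
  obtain ⟨w, hw⟩ := hshatter {i | 0 < -u i}
  have hpos := sum_mul_power_pos hr hv ⟨j, hj⟩
  have hneg := sum_mul_power_pos (u := -u) hr hw ⟨k, hk⟩
  rw [sum_mul_power_eq hsum hc] at hpos
  rw [sum_mul_power_eq hsum' (by simp [hc])] at hneg
  simp only [Pi.neg_apply, neg_mul, Finset.sum_neg_distrib, neg_pos] at hneg
  exact hneg.not_gt hpos

end PowerOfPoint

/-- **VC-dimension bound for point-complement ranges of disks.**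
(1) No four pairwise distinct closed disks in `ℝ²` are shattered by the ranges
`{i : v ∉ Dᵢ}`, `v ∈ ℝ²`: some subset `S` of the index set is not realized.
(2) Consequently, for a finite set `𝒟` of closed disks, the range space
`(𝒟, {{D ∈ 𝒟 : v ∉ D} : v ∈ ℝ²})` has VC-dimension at most `3`: every shattered
subfamily has at most three members. -/
theorem vc_dim_point_complement_ranges_le_three :
    (∀ (c : Fin 4 → EuclideanSpace ℝ (Fin 2)) (r : Fin 4 → ℝ),
      (∀ i, 0 < r i) →
      (∀ i j, i ≠ j → Metric.closedBall (c i) (r i) ≠ Metric.closedBall (c j) (r j)) →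
      ∃ S : Set (Fin 4), ∀ v : EuclideanSpace ℝ (Fin 2),
        {i | v ∉ Metric.closedBall (c i) (r i)} ≠ S)
    ∧
    (∀ 𝒟 : Finset (EuclideanSpace ℝ (Fin 2) × ℝ),
      (∀ D ∈ 𝒟, 0 < D.2) →
      ∀ 𝒜 : Finset (EuclideanSpace ℝ (Fin 2) × ℝ), 𝒜 ⊆ 𝒟 →
        (∀ S ⊆ 𝒜, ∃ v : EuclideanSpace ℝ (Fin 2),
          𝒜.filter (fun D => v ∉ Metric.closedBall D.1 D.2) = S) →
        𝒜.card ≤ 3) := by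
  refine ⟨fun c r hr _ => exists_ne_setOf_notMem_closedBall (fun i => (hr i).le) (by simp), ?_⟩
  intro 𝒟 h𝒟 𝒜 h𝒜 hshatter
  by_contra! hcard
  obtain ⟨S, hS⟩ := exists_ne_setOf_notMem_closedBall (ι := 𝒜) (c := fun D => D.1.1)
    (r := fun D => D.1.2) (fun D => (h𝒟 _ (h𝒜 D.2)).le) (by simpa using hcard)
  obtain ⟨v, hv⟩ := hshatter (S.toFinset.map (Function.Embedding.subtype _))
    (fun _ hD => by obtain ⟨D, -, rfl⟩ := Finset.mem_map.mp hD; exact D.2)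
  refine hS v (Set.ext fun D => ?_)
  simpa using congrArg (D.1 ∈ ·) hv
end

section
/- Let D₁, D₂, D₃ be three pairwise tangent closed disks of equal radius in ℝ² (each pair touching in exactly one point), and let the three points of pairwise tangency be q₁₂, q₁₃, q₂₃. Then D₁ ∩ D₂ ∩ D₃ = ∅, and any point set stabbing {D₁, D₂, D₃} has at least two points; moreover, a two-point set stabs {D₁, D₂, D₃} only if at least one of its points is one of the tangency points q₁₂, q₁₃, q₂₃. -/
/-!
In a strictly convex space two closed balls of radius `ρ` whose centres are `2ρ` apart meet
only in the midpoint of the centres. Two of the three tangency points share the centre `c₁`, so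
they are distinct and no point lies in all three disks; and two points stabbing three disks must
have one point in two of them, which is then a tangency point.
-/

open Metric

theorem closedBall_inter_closedBall_eq_singleton_midpoint {V P : Type*} [NormedAddCommGroup V]
    [NormedSpace ℝ V] [StrictConvexSpace ℝ V] [MetricSpace P] [NormedAddTorsor V P]
    {a b : P} {ρ : ℝ} (hab : dist a b = 2 * ρ) :
    closedBall a ρ ∩ closedBall b ρ = {midpoint ℝ a b} := by
  ext x
  simp only [Set.mem_inter_iff, mem_closedBall, Set.mem_singleton_iff]
  constructor
  · rintro ⟨hxa, hxb⟩
    -- `2ρ ≤ dist a x + dist x b` forces both distances to equal `ρ`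
    have := dist_triangle a x b
    rw [dist_comm] at hxa
    exact eq_midpoint_of_dist_eq_half (by linarith) (by linarith)
  · rintro rfl
    simp [dist_midpoint_left, dist_midpoint_right, hab]

theorem closedBall_inter_closedBall_inter_closedBall_eq_empty {V P : Type*}
    [NormedAddCommGroup V] [NormedSpace ℝ V] [StrictConvexSpace ℝ V] [MetricSpace P]
    [NormedAddTorsor V P] {c₁ c₂ c₃ : P} {ρ : ℝ}
    (h12 : dist c₁ c₂ = 2 * ρ) (h13 : dist c₁ c₃ = 2 * ρ) (h23 : c₂ ≠ c₃) :
    closedBall c₁ ρ ∩ closedBall c₂ ρ ∩ closedBall c₃ ρ = ∅ := by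
  refine Set.eq_empty_of_forall_notMem fun x ⟨⟨hx1, hx2⟩, hx3⟩ => h23 ?_
  have h2 : x ∈ ({midpoint ℝ c₁ c₂} : Set P) :=
    closedBall_inter_closedBall_eq_singleton_midpoint h12 ▸ ⟨hx1, hx2⟩
  have h3 : x ∈ ({midpoint ℝ c₁ c₃} : Set P) :=
    closedBall_inter_closedBall_eq_singleton_midpoint h13 ▸ ⟨hx1, hx3⟩
  have := (midpoint_eq_midpoint_iff_vsub_eq_vsub ℝ).1 (Eq.trans h2.symm h3)
  rwa [vsub_self, eq_comm, vsub_eq_zero_iff_eq, eq_comm] at this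

namespace Set

variable {α : Type*} {A B C S : Set α}

theorem two_le_encard_of_inter_nonempty (hABC : A ∩ B ∩ C = ∅) (hA : (S ∩ A).Nonempty)
    (hB : (S ∩ B).Nonempty) (hC : (S ∩ C).Nonempty) : 2 ≤ S.encard := by
  obtain ⟨x, hxS, hxA⟩ := hA
  obtain ⟨y, hyS, hyB⟩ := hB
  obtain ⟨z, hzS, hzC⟩ := hC
  suffices x ≠ y ∨ x ≠ z by
    refine Order.add_one_le_of_lt (one_lt_encard_iff.2 ?_)
    rcases this with h | h
    exacts [⟨x, y, hxS, hyS, h⟩, ⟨x, z, hxS, hzS, h⟩]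
  by_contra! h
  obtain ⟨rfl, rfl⟩ := h
  exact (hABC ▸ ⟨⟨hxA, hyB⟩, hzC⟩ : x ∈ (∅ : Set α))

theorem exists_mem_inter_of_encard_le_two (hS : S.encard ≤ 2) (hA : (S ∩ A).Nonempty)
    (hB : (S ∩ B).Nonempty) (hC : (S ∩ C).Nonempty) :
    ∃ p ∈ S, p ∈ A ∩ B ∨ p ∈ A ∩ C ∨ p ∈ B ∩ C := by
  obtain ⟨x, hxS, hxA⟩ := hA
  obtain ⟨y, hyS, hyB⟩ := hB
  obtain ⟨z, hzS, hzC⟩ := hC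
  by_contra! h
  have hxy : x ≠ y := by rintro rfl; exact h x hxS |>.1 ⟨hxA, hyB⟩
  have hxz : x ≠ z := by rintro rfl; exact h x hxS |>.2.1 ⟨hxA, hzC⟩
  have hyz : y ≠ z := by rintro rfl; exact h y hyS |>.2.2 ⟨hyB, hzC⟩
  have h3 : ({x, y, z} : Set α).encard = 3 := encard_eq_three.2 ⟨x, y, z, hxy, hxz, hyz, rfl⟩
  have := h3 ▸ encard_le_encard (insert_subset hxS (insert_subset hyS (singleton_subset_iff.2 hzS)))
  exact absurd (this.trans hS) (by norm_num)

end Set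

/-- **Stabbing three pairwise tangent disks of equal radius.**
Let `D₁, D₂, D₃` be three pairwise externally tangent closed disks of equal radius
`ρ > 0` in `ℝ²` (so the centers are at pairwise distance `2ρ`, each pair of disks
touching in exactly one point, namely the midpoint of the two centers).  Then
`D₁ ∩ D₂ ∩ D₃ = ∅`; every point set stabbing `{D₁, D₂, D₃}` has at least two points;
and a two-point set stabs `{D₁, D₂, D₃}` only if at least one of its points is one of
the three tangency points. -/
theorem stab_three_tangent_disks
    (c₁ c₂ c₃ : EuclideanSpace ℝ (Fin 2)) (ρ : ℝ) (hρ : 0 < ρ)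
    (h12 : dist c₁ c₂ = 2 * ρ) (h13 : dist c₁ c₃ = 2 * ρ) (h23 : dist c₂ c₃ = 2 * ρ) :
    (Metric.closedBall c₁ ρ ∩ Metric.closedBall c₂ ρ ∩ Metric.closedBall c₃ ρ = ∅)
    ∧ (∀ P : Set (EuclideanSpace ℝ (Fin 2)),
        (P ∩ Metric.closedBall c₁ ρ).Nonempty →
        (P ∩ Metric.closedBall c₂ ρ).Nonempty →
        (P ∩ Metric.closedBall c₃ ρ).Nonempty →
        2 ≤ P.encard)
    ∧ (∀ P : Set (EuclideanSpace ℝ (Fin 2)), P.encard = 2 →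
        (P ∩ Metric.closedBall c₁ ρ).Nonempty →
        (P ∩ Metric.closedBall c₂ ρ).Nonempty →
        (P ∩ Metric.closedBall c₃ ρ).Nonempty →
        ∃ p ∈ P, p = midpoint ℝ c₁ c₂ ∨ p = midpoint ℝ c₁ c₃ ∨ p = midpoint ℝ c₂ c₃) := by
  have hc₂₃ : c₂ ≠ c₃ := by rintro rfl; simp at h23; linarith
  have hempty := closedBall_inter_closedBall_inter_closedBall_eq_empty h12 h13 hc₂₃
  refine ⟨hempty, fun P => Set.two_le_encard_of_inter_nonempty hempty, fun P hP h1 h2 h3 => ?_⟩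
  obtain ⟨p, hpP, hp⟩ := Set.exists_mem_inter_of_encard_le_two hP.le h1 h2 h3
  rw [closedBall_inter_closedBall_eq_singleton_midpoint h12,
    closedBall_inter_closedBall_eq_singleton_midpoint h13,
    closedBall_inter_closedBall_eq_singleton_midpoint h23] at hp
  exact ⟨p, hpP, hp⟩
end
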